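/- arXiv:2111.09196 — 5 statements merged into one kernel-verified Lean document; each statement's English description precedes it below -/
import Mathlib

section
/- Let $\mu$ be a positive weight function on the vertices of the path graph $L_n$ (vertices $\{1,\dots,n\}$, edges between consecutive integers) and define $\tilde\mu(j) = \mu(j) + \mu(n+1-j)$. Then $C_{\tilde\mu} \le C_\mu$, where $C_\nu = \sup\{\nu(B(j,2k+1))/\nu(B(j,k)) : 1\le j\le n,\, k\ge 0\}$ and $B(j,r)$ denotes the closed ball in the path metric. -/
open Finset

/-- The closed ball of center `j` and radius `k` in the path graph `L_n` on `{1,…,n}`. -/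
def lball (n j k : ℕ) : Finset ℕ :=
  (Finset.Icc 1 n).filter fun i => j - k ≤ i ∧ i ≤ j + k

/-- The set of doubling quotients of a weight `μ` on `L_n`. -/
def ratioSet (n : ℕ) (μ : ℕ → ℝ) : Set ℝ :=
  {x | ∃ j ∈ Finset.Icc 1 n, ∃ k : ℕ,
    x = (∑ i ∈ lball n j (2 * k + 1), μ i) / (∑ i ∈ lball n j k, μ i)}

lemma mem_lball {n j k i : ℕ} : i ∈ lball n j k ↔ 1 ≤ i ∧ i ≤ n ∧ j - k ≤ i ∧ i ≤ j + k := by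
  simp [lball, Finset.mem_filter, Finset.mem_Icc, and_assoc]

lemma lball_trunc {n j : ℕ} (hj1 : 1 ≤ j) (hj2 : j ≤ n) (k : ℕ) :
    lball n j k = lball n j (min k n) := by
  ext i; simp only [mem_lball]; omega

lemma lball_trunc2 {n j : ℕ} (hj1 : 1 ≤ j) (hj2 : j ≤ n) (k : ℕ) :
    lball n j (2 * k + 1) = lball n j (2 * (min k n) + 1) := by
  ext i; simp only [mem_lball]; omega

lemma refl_sum {n j : ℕ} (hj1 : 1 ≤ j) (hj2 : j ≤ n) (k : ℕ) (μ : ℕ → ℝ) :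
    ∑ i ∈ lball n j k, μ (n + 1 - i) = ∑ i ∈ lball n (n + 1 - j) k, μ i := by
  apply Finset.sum_nbij' (fun i => n + 1 - i) (fun i => n + 1 - i)
  · intro a ha; simp only [mem_lball] at *; omega
  · intro a ha; simp only [mem_lball] at *; omega
  · intro a ha; simp only [mem_lball] at *; omega
  · intro a ha; simp only [mem_lball] at *; omega
  · intro a ha; rfl

lemma lball_sum_pos {n j : ℕ} (hj1 : 1 ≤ j) (hj2 : j ≤ n) (k : ℕ) (μ : ℕ → ℝ)
    (hμ : ∀ j ∈ Finset.Icc 1 n, 0 < μ j) :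
    0 < ∑ i ∈ lball n j k, μ i := by
  apply Finset.sum_pos
  · intro i hi
    rw [mem_lball] at hi
    exact hμ i (Finset.mem_Icc.mpr ⟨hi.1, hi.2.1⟩)
  · exact ⟨j, mem_lball.mpr ⟨hj1, hj2, by omega, by omega⟩⟩

lemma mediant_le_max (a b c d : ℝ) (hc : 0 < c) (hd : 0 < d) :
    (a + b) / (c + d) ≤ max (a / c) (b / d) := by
  rw [div_le_iff₀ (by linarith)]
  have h1 : a ≤ max (a / c) (b / d) * c := by
    calc a = a / c * c := (div_mul_cancel₀ a hc.ne').symm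
    _ ≤ _ := mul_le_mul_of_nonneg_right (le_max_left _ _) hc.le
  have h2 : b ≤ max (a / c) (b / d) * d := by
    calc b = b / d * d := (div_mul_cancel₀ b hd.ne').symm
    _ ≤ _ := mul_le_mul_of_nonneg_right (le_max_right _ _) hd.le
  nlinarith

/-- Symmetrization does not increase the doubling constant on the path graph `L_n`:
if `μ̃(j) = μ(j) + μ(n+1-j)` then `C_{μ̃} ≤ C_μ`. -/
theorem stmt_2 (n : ℕ) (hn : 1 ≤ n) (μ : ℕ → ℝ)
    (hμ : ∀ j ∈ Finset.Icc 1 n, 0 < μ j) :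
    sSup (ratioSet n (fun j => μ j + μ (n + 1 - j))) ≤ sSup (ratioSet n μ) := by
  have hbdd : BddAbove (ratioSet n μ) := by
    apply Set.Finite.bddAbove
    apply Set.Finite.subset (Set.Finite.image
      (fun p : ℕ × ℕ => (∑ i ∈ lball n p.1 (2 * p.2 + 1), μ i) / (∑ i ∈ lball n p.1 p.2, μ i))
      (Set.Finite.prod (Set.finite_Icc 1 n) (Set.finite_Icc 0 n)))
    rintro x ⟨j, hj, k, rfl⟩
    rw [Finset.mem_Icc] at hj
    refine ⟨(j, min k n), ⟨Set.mem_Icc.mpr ⟨hj.1, hj.2⟩, Set.mem_Icc.mpr ⟨Nat.zero_le _, min_le_right _ _⟩⟩, ?_⟩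
    simp only
    rw [lball_trunc hj.1 hj.2 k, lball_trunc2 hj.1 hj.2 k]
  -- 0 ≤ sSup (ratioSet n μ)
  have hmem1 : (∑ i ∈ lball n 1 1, μ i) / (∑ i ∈ lball n 1 0, μ i) ∈ ratioSet n μ := by
    exact ⟨1, Finset.mem_Icc.mpr ⟨le_refl 1, hn⟩, 0, by norm_num⟩
  have h0 : 0 ≤ sSup (ratioSet n μ) := by
    refine le_trans ?_ (le_csSup hbdd hmem1)
    exact div_nonneg (lball_sum_pos le_rfl hn 1 μ hμ).le (lball_sum_pos le_rfl hn 0 μ hμ).le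
  apply Real.sSup_le _ h0
  rintro x ⟨j, hj, k, rfl⟩
  rw [Finset.mem_Icc] at hj
  have hj' : 1 ≤ n + 1 - j ∧ n + 1 - j ≤ n := by omega
  have key : ∀ m : ℕ, ∑ i ∈ lball n j m, (μ i + μ (n + 1 - i)) =
      (∑ i ∈ lball n j m, μ i) + ∑ i ∈ lball n (n + 1 - j) m, μ i := by
    intro m
    rw [Finset.sum_add_distrib, refl_sum hj.1 hj.2 m μ]
  rw [key, key]
  have hc := lball_sum_pos hj.1 hj.2 k μ hμ
  have hd := lball_sum_pos hj'.1 hj'.2 k μ hμ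
  refine le_trans (mediant_le_max _ _ _ _ hc hd) (max_le ?_ ?_)
  · exact le_csSup hbdd ⟨j, Finset.mem_Icc.mpr hj, k, rfl⟩
  · exact le_csSup hbdd ⟨n + 1 - j, Finset.mem_Icc.mpr hj', k, rfl⟩
end

section
/- For $n \ge 2$, the measure $\sigma$ on the path graph $L_n$ defined by $\sigma(j) = \sin\big(\frac{j\pi}{n+1}\big)$ satisfies $\max_{1\le j\le n} \frac{\sigma(B(j,1))}{\sigma(j)} = 1 + 2\cos\big(\frac{\pi}{n+1}\big)$. -/
open Finset Real

/-! The sine vector `j ↦ sin (jπ/(n+1))` vanishes at the two phantom vertices `0` and `n+1`, so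
every unit ball of `L_n` may be treated as the full triple `{j-1, j, j+1}`; on that triple
`sin (x - y) + sin x + sin (x + y) = sin x (1 + 2 cos y)` makes the ratio `σ(B(j,1))/σ(j)`
the constant `1 + 2 cos (π/(n+1))`, and `σ(j) > 0` on `{1,…,n}`. -/

lemma lball_one_subset (n j : ℕ) : lball n j 1 ⊆ {j - 1, j, j + 1} := by
  intro i hi
  simp only [lball, mem_filter, mem_Icc] at hi
  simp only [mem_insert, mem_singleton]
  omega

lemma sum_lball_one {M : Type*} [AddCommMonoid M] {n j : ℕ} (hj : j ∈ Icc 1 n) (f : ℕ → M)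
    (h₀ : f 0 = 0) (hsucc : f (n + 1) = 0) :
    ∑ l ∈ lball n j 1, f l = f (j - 1) + f j + f (j + 1) := by
  rw [mem_Icc] at hj
  rw [sum_subset (lball_one_subset n j), sum_insert (by simp; omega), sum_pair (by omega),
    add_assoc]
  intro i hi hi'
  simp only [lball, mem_filter, mem_Icc, mem_insert, mem_singleton] at hi hi'
  obtain rfl | rfl : i = 0 ∨ i = n + 1 := by omega
  exacts [h₀, hsucc]

lemma sin_sub_add_sin_add_sin (x y : ℝ) :
    sin (x - y) + sin x + sin (x + y) = sin x * (1 + 2 * cos y) := by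
  rw [sin_sub, sin_add]; ring

lemma sin_natCast_mul_pi_div_pos {n j : ℕ} (hj : j ∈ Icc 1 n) :
    0 < sin (j * π / (n + 1)) := by
  rw [mem_Icc] at hj
  have hj₁ : (1 : ℝ) ≤ j := by exact_mod_cast hj.1
  have hjn : (j : ℝ) < n + 1 := by exact_mod_cast Nat.lt_succ_of_le hj.2
  apply sin_pos_of_pos_of_lt_pi (by positivity)
  rw [div_lt_iff₀ (by positivity)]
  nlinarith [pi_pos]

lemma sum_lball_one_sin (n : ℕ) {j : ℕ} (hj : j ∈ Icc 1 n) :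
    ∑ l ∈ lball n j 1, sin (l * π / (n + 1))
      = sin (j * π / (n + 1)) * (1 + 2 * cos (π / (n + 1))) := by
  have hsucc : sin (((n + 1 : ℕ) : ℝ) * π / (n + 1)) = 0 := by
    rw [Nat.cast_succ, mul_div_cancel_left₀ _ (by positivity), sin_pi]
  rw [sum_lball_one hj _ (by simp) hsucc, ← sin_sub_add_sin_add_sin,
    Nat.cast_sub (mem_Icc.mp hj).1]
  push_cast
  congr 3 <;> ring

/-- For `n ≥ 2`, the measure `σ(j) = sin(jπ/(n+1))` on the path graph `L_n` satisfies
`max_{1 ≤ j ≤ n} σ(B(j,1))/σ(j) = 1 + 2 cos(π/(n+1))`. -/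
theorem stmt_4 (n : ℕ) (hn : 2 ≤ n) :
    sSup {x | ∃ j ∈ Finset.Icc 1 n,
        x = (∑ l ∈ lball n j 1, Real.sin (l * π / (n + 1))) / Real.sin (j * π / (n + 1))}
      = 1 + 2 * Real.cos (π / (n + 1)) := by
  have ratio : ∀ j ∈ Icc 1 n,
      (∑ l ∈ lball n j 1, sin (l * π / (n + 1))) / sin (j * π / (n + 1))
        = 1 + 2 * cos (π / (n + 1)) := fun j hj => by
    rw [sum_lball_one_sin n hj, mul_div_cancel_left₀ _ (sin_natCast_mul_pi_div_pos hj).ne']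
  have h1 : 1 ∈ Icc 1 n := mem_Icc.mpr ⟨le_rfl, by omega⟩
  suffices hset : {x | ∃ j ∈ Icc 1 n,
      x = (∑ l ∈ lball n j 1, sin (l * π / (n + 1))) / sin (j * π / (n + 1))}
        = {1 + 2 * cos (π / (n + 1))} by
    rw [hset, csSup_singleton]
  ext x
  constructor
  · rintro ⟨j, hj, rfl⟩
    exact ratio j hj
  · rintro rfl
    exact ⟨1, h1, (ratio 1 h1).symm⟩
end

section
/- Let $\mu$ be a symmetric measure on $L_n$ (i.e., $a_j = a_{n+1-j}$ where $a_j=\mu(j)>0$) with $C^0_\mu < 3$, where $C^0_\mu = \max_j \mu(B(j,1))/\mu(j)$. Then for all $1\le i < j \le \lceil n/2 \rceil$ one has $a_i < a_j < \frac{j}{i} a_i$. -/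
open Finset

/-- If `a` is a symmetric positive weight on `L_n` with radius-one doubling constant `C⁰_μ < 3`,
then for all `1 ≤ i < j ≤ ⌈n/2⌉` one has `a i < a j < (j/i) a i`. -/
theorem stmt_5 (n : ℕ) (a : ℕ → ℝ) (ha : ∀ j ∈ Finset.Icc 1 n, 0 < a j)
    (hsym : ∀ j ∈ Finset.Icc 1 n, a j = a (n + 1 - j))
    (hC0 : sSup {x | ∃ j ∈ Finset.Icc 1 n, x = (∑ l ∈ lball n j 1, a l) / a j} < 3)
    (i j : ℕ) (hi : 1 ≤ i) (hij : i < j) (hj : j ≤ (n + 1) / 2) :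
    a i < a j ∧ a j < (j : ℝ) / (i : ℝ) * a i := by
  have hn : 3 ≤ n := by omega
  -- every element of the set is < 3
  have hbdd : BddAbove {x | ∃ j ∈ Finset.Icc 1 n, x = (∑ l ∈ lball n j 1, a l) / a j} := by
    have hset : {x | ∃ j ∈ Finset.Icc 1 n, x = (∑ l ∈ lball n j 1, a l) / a j}
        = (fun j => (∑ l ∈ lball n j 1, a l) / a j) '' ↑(Finset.Icc 1 n) := by
      ext x; simp [eq_comm]
    rw [hset]
    exact ((Finset.Icc 1 n).finite_toSet.image _).bddAbove
  have hball : ∀ m ∈ Finset.Icc 1 n, (∑ l ∈ lball n m 1, a l) < 3 * a m := by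
    intro m hm
    have h1 : (∑ l ∈ lball n m 1, a l) / a m
        ≤ sSup {x | ∃ j ∈ Finset.Icc 1 n, x = (∑ l ∈ lball n j 1, a l) / a j} :=
      le_csSup hbdd ⟨m, hm, rfl⟩
    have h2 := lt_of_le_of_lt h1 hC0
    rwa [div_lt_iff₀ (ha m hm)] at h2
  -- strict concavity in the interior
  have hconc : ∀ k, 1 ≤ k → k + 2 ≤ n → a k + a (k + 2) < 2 * a (k + 1) := by
    intro k hk hkn
    have hm : k + 1 ∈ Finset.Icc 1 n := by simp; omega
    have hb : lball n (k + 1) 1 = {k, k + 1, k + 2} := by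
      ext x; simp [lball]; omega
    have h := hball (k + 1) hm
    rw [hb, Finset.sum_insert (by simp), Finset.sum_insert (by simp),
      Finset.sum_singleton] at h
    linarith
  -- boundary condition
  have hbound : a 2 < 2 * a 1 := by
    have hm : (1 : ℕ) ∈ Finset.Icc 1 n := by simp; omega
    have hb : lball n 1 1 = {1, 2} := by
      ext x; simp [lball]; omega
    have h := hball 1 hm
    rw [hb, Finset.sum_insert (by simp), Finset.sum_singleton] at h
    linarith
  -- differences strictly decreasing
  have hd : ∀ k l, 1 ≤ k → k < l → l + 1 ≤ n →
      a (l + 1) - a l < a (k + 1) - a k := by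
    intro k l hk hkl hln
    induction l with
    | zero => omega
    | succ m ih =>
      have hstep : a (m + 1 + 1) - a (m + 1) < a (m + 1) - a m := by
        have h := hconc m (by omega) (by omega)
        have e : m + 2 = m + 1 + 1 := by omega
        rw [e] at h
        linarith
      rcases Nat.lt_or_ge k m with h | h
      · exact lt_trans hstep (ih h (by omega))
      · have : k = m := by omega
        subst this
        exact hstep
  -- strict monotonicity up to the middle
  have hmono : ∀ m, 1 ≤ m → m + 1 ≤ (n + 1) / 2 → a m < a (m + 1) := by
    intro m hm hm2
    by_contra h
    push_neg at h
    have h1 : a (n - m + 1) - a (n - m) < a (m + 1) - a m :=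
      hd m (n - m) hm (by omega) (by omega)
    have e1 : a m = a (n + 1 - m) := hsym m (by simp; omega)
    have e2 : a (m + 1) = a (n + 1 - (m + 1)) := hsym (m + 1) (by simp; omega)
    have e3 : n + 1 - m = n - m + 1 := by omega
    have e4 : n + 1 - (m + 1) = n - m := by omega
    rw [e3] at e1
    rw [e4] at e2
    linarith
  -- key estimate: k * (a(k+1) - a k) < a k
  have hkey : ∀ k, 1 ≤ k → k + 1 ≤ (n + 1) / 2 → (k : ℝ) * (a (k + 1) - a k) < a k := by
    intro k hk hk2
    rcases eq_or_lt_of_le hk with h | h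
    · rw [← h]; push_cast; linarith
    · have hdk1 : a (k + 1) - a k < a 2 - a 1 := hd 1 k le_rfl h (by omega)
      have hsum : ((k - 1 : ℕ) : ℝ) * (a (k + 1) - a k)
          < ∑ l ∈ Finset.range (k - 1), (a (l + 1 + 1) - a (l + 1)) := by
        have hne : (Finset.range (k - 1)).Nonempty := by
          rw [Finset.nonempty_range_iff]; omega
        calc ((k - 1 : ℕ) : ℝ) * (a (k + 1) - a k)
            = ∑ _l ∈ Finset.range (k - 1), (a (k + 1) - a k) := by
              rw [Finset.sum_const, Finset.card_range, nsmul_eq_mul]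
          _ < ∑ l ∈ Finset.range (k - 1), (a (l + 1 + 1) - a (l + 1)) := by
              apply Finset.sum_lt_sum_of_nonempty hne
              intro l hl
              rw [Finset.mem_range] at hl
              exact hd (l + 1) k (by omega) (by omega) (by omega)
      have htel : ∑ l ∈ Finset.range (k - 1), (a (l + 1 + 1) - a (l + 1))
          = a (k - 1 + 1) - a (0 + 1) := Finset.sum_range_sub (fun l => a (l + 1)) (k - 1)
      have e5 : k - 1 + 1 = k := by omega
      rw [e5] at htel
      rw [htel] at hsum
      have hcast : ((k - 1 : ℕ) : ℝ) = (k : ℝ) - 1 := by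
        have : (1 : ℕ) ≤ k := hk
        push_cast [this]
        ring
      rw [hcast] at hsum
      norm_num at hsum
      nlinarith
  have hipos : (0 : ℝ) < (i : ℝ) := by positivity
  -- Part 1: a i < a m for i < m ≤ (n+1)/2
  have part1 : ∀ m, i + 1 ≤ m → m ≤ (n + 1) / 2 → a i < a m := by
    intro m hm
    induction m, hm using Nat.le_induction with
    | base => intro h; exact hmono i hi h
    | succ m hm ih =>
      intro h
      exact lt_trans (ih (by omega)) (hmono m (by omega) h)
  -- Part 2: i * a m < m * a i for i < m ≤ (n+1)/2
  have part2 : ∀ m, i + 1 ≤ m → m ≤ (n + 1) / 2 → (i : ℝ) * a m < (m : ℝ) * a i := by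
    intro m hm
    induction m, hm using Nat.le_induction with
    | base =>
      intro h
      have hk := hkey i hi h
      push_cast
      nlinarith
    | succ m hm ih =>
      intro h
      have ihm := ih (by omega)
      have hdm : a (m + 1) - a m < a (i + 1) - a i := hd i m hi (by omega) (by omega)
      have hk := hkey i hi (by omega)
      have hmul : (i : ℝ) * (a (m + 1) - a m) < (i : ℝ) * (a (i + 1) - a i) :=
        mul_lt_mul_of_pos_left hdm hipos
      push_cast
      nlinarith
  refine ⟨part1 j (by omega) hj, ?_⟩
  have h2 := part2 j (by omega) hj
  rw [div_mul_eq_mul_div, lt_div_iff₀ hipos]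
  linarith [mul_comm (a j) ((i : ℝ))]
end

section
/- Let $n \in \mathbb{N}$ and $a_1,\dots,a_n > 0$ satisfy $a_i = a_{n+1-i}$ for all $i$ and $a_i \le a_{i+1}$ for $1 \le i < \lceil n/2 \rceil$. Setting $a_0 = a_{n+1} = 0$, we have $\max_{1\le i\le n} \frac{a_{i-1} + a_{i+1}}{a_i} \ge 2\cos\big(\frac{\pi}{n+1}\big)$. -/
/-!
Test the assumed strict inequality `a (i-1) + a (i+1) < 2 cos θ · a i` (with `θ = π/(n+1)`)
against the positive eigenvector `b i = sin (i θ)` of the path adjacency operator. Both `a` and `b`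
vanish at `0` and `n + 1`, so that operator is self-adjoint for them, and pairing gives
`∑ b i (a (i-1) + a (i+1)) = 2 cos θ ∑ b i a i`, contradicting the strict termwise inequality.
-/

open Real Finset

lemma sum_Icc_mul_succ_eq_sum_Icc_mul_pred {f g : ℕ → ℝ} (n : ℕ) (hf : f 0 = 0)
    (hg : g (n + 1) = 0) :
    ∑ i ∈ Icc 1 n, f i * g (i + 1) = ∑ i ∈ Icc 1 n, g i * f (i - 1) := by
  have h : ∀ F : ℕ → ℝ, ∑ i ∈ Icc 1 n, F i = ∑ k ∈ range n, F (k + 1) := fun F => by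
    rw [← Ico_add_one_right_eq_Icc, sum_Ico_eq_sum_range, Nat.add_sub_cancel]
    simp only [add_comm 1]
  have hl := sum_range_succ' (fun i => f i * g (i + 1)) n
  have hr := sum_range_succ (fun i => g (i + 1) * f i) n
  simp only [hf, hg, zero_mul, add_zero] at hl hr
  rw [h, h, ← hl]
  simp only [Nat.add_sub_cancel]
  rw [← hr]
  exact sum_congr rfl fun _ _ => mul_comm _ _

lemma sum_mul_neighbour_sum_comm {a b : ℕ → ℝ} (n : ℕ) (ha₀ : a 0 = 0)
    (ha : a (n + 1) = 0) (hb₀ : b 0 = 0) (hb : b (n + 1) = 0) :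
    ∑ i ∈ Icc 1 n, b i * (a (i - 1) + a (i + 1)) =
      ∑ i ∈ Icc 1 n, a i * (b (i - 1) + b (i + 1)) := by
  simp only [mul_add, sum_add_distrib, sum_Icc_mul_succ_eq_sum_Icc_mul_pred n hb₀ ha,
    sum_Icc_mul_succ_eq_sum_Icc_mul_pred n ha₀ hb]
  ring

lemma exists_le_neighbour_sum_of_eigenvector {a b : ℕ → ℝ} {μ : ℝ} {n : ℕ} (hn : 1 ≤ n)
    (ha₀ : a 0 = 0) (ha : a (n + 1) = 0) (hb₀ : b 0 = 0) (hb : b (n + 1) = 0)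
    (hb_pos : ∀ i ∈ Icc 1 n, 0 < b i)
    (hb_eigen : ∀ i ∈ Icc 1 n, b (i - 1) + b (i + 1) = μ * b i) :
    ∃ i ∈ Icc 1 n, μ * a i ≤ a (i - 1) + a (i + 1) := by
  by_contra! hlt
  have hsum :
      ∑ i ∈ Icc 1 n, b i * (a (i - 1) + a (i + 1)) < ∑ i ∈ Icc 1 n, b i * (μ * a i) :=
    sum_lt_sum_of_nonempty ⟨1, mem_Icc.mpr ⟨le_rfl, hn⟩⟩ fun i hi =>
      mul_lt_mul_of_pos_left (hlt i hi) (hb_pos i hi)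
  rw [sum_mul_neighbour_sum_comm n ha₀ ha hb₀ hb] at hsum
  refine hsum.ne (sum_congr rfl fun i hi => ?_)
  rw [hb_eigen i hi]
  ring

lemma sin_sub_add_sin_add (t x : ℝ) : sin (t - x) + sin (t + x) = 2 * cos x * sin t := by
  rw [sin_sub, sin_add]
  ring

lemma sin_nat_mul_pi_div_pos {n i : ℕ} (hi : i ∈ Icc 1 n) : 0 < sin (i * (π / (n + 1))) := by
  obtain ⟨hi₁, hin⟩ := mem_Icc.mp hi
  apply sin_pos_of_pos_of_lt_pi
  · have : (0 : ℝ) < i := by exact_mod_cast hi₁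
    positivity
  · rw [← mul_div_assoc, div_lt_iff₀ (by positivity), mul_comm]
    gcongr
    exact_mod_cast Nat.lt_succ_of_le hin

lemma exists_two_cos_pi_div_mul_le_neighbour_sum {a : ℕ → ℝ} {n : ℕ} (hn : 1 ≤ n)
    (ha₀ : a 0 = 0) (ha : a (n + 1) = 0) :
    ∃ i ∈ Icc 1 n, 2 * cos (π / (n + 1)) * a i ≤ a (i - 1) + a (i + 1) := by
  set θ := π / (n + 1)
  refine exists_le_neighbour_sum_of_eigenvector (b := fun i => sin (i * θ)) hn ha₀ ha
    (by simp) ?_ (fun i hi => sin_nat_mul_pi_div_pos hi) fun i hi => ?_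
  · simp only [θ]
    rw [Nat.cast_succ, mul_div_cancel₀ _ (by positivity), sin_pi]
  · rw [← sin_sub_add_sin_add]
    push_cast [(mem_Icc.mp hi).1]
    ring_nf

theorem stmt_6_general (n : ℕ) (hn : 1 ≤ n) (a : ℕ → ℝ)
    (hpos : ∀ i ∈ Finset.Icc 1 n, 0 < a i)
    (h0 : a 0 = 0) (hn1 : a (n + 1) = 0) :
    2 * Real.cos (π / (n + 1)) ≤
      sSup {x | ∃ i ∈ Finset.Icc 1 n, x = (a (i - 1) + a (i + 1)) / a i} := by
  obtain ⟨i, hi, hle⟩ := exists_two_cos_pi_div_mul_le_neighbour_sum hn h0 hn1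
  have hbdd : BddAbove {x | ∃ i ∈ Icc 1 n, x = (a (i - 1) + a (i + 1)) / a i} := by
    refine (((Icc 1 n).finite_toSet.image
      fun i => (a (i - 1) + a (i + 1)) / a i).subset ?_).bddAbove
    rintro x ⟨j, hj, rfl⟩
    exact ⟨j, hj, rfl⟩
  exact ((le_div_iff₀ (hpos i hi)).mpr hle).trans (le_csSup hbdd ⟨i, hi, rfl⟩)

/-- Let `a 1, …, a n` be positive reals with `a i = a (n+1-i)` and `a i ≤ a (i+1)` for
`1 ≤ i < ⌈n/2⌉`, and with `a 0 = a (n+1) = 0`. Then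
`max_{1 ≤ i ≤ n} (a (i-1) + a (i+1)) / a i ≥ 2 cos(π/(n+1))`. -/
theorem stmt_6 (n : ℕ) (hn : 1 ≤ n) (a : ℕ → ℝ)
    (hpos : ∀ i ∈ Finset.Icc 1 n, 0 < a i)
    (h0 : a 0 = 0) (hn1 : a (n + 1) = 0)
    (hsym : ∀ i ∈ Finset.Icc 1 n, a i = a (n + 1 - i))
    (hmono : ∀ i, 1 ≤ i → i < (n + 1) / 2 → a i ≤ a (i + 1)) :
    2 * Real.cos (π / (n + 1)) ≤
      sSup {x | ∃ i ∈ Finset.Icc 1 n, x = (a (i - 1) + a (i + 1)) / a i} :=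
  stmt_6_general n hn a hpos h0 hn1
end

section
/- Let $\mu$ be a positive weight function on $\mathbb{Z}$ with $a_j = \mu(j)$ and $C^0_\mu = \sup_n \frac{a_{n-1}+a_n+a_{n+1}}{a_n} = 3$. If $a_{j_0} < a_{j_0+1}$ for some $j_0 \in \mathbb{Z}$, then $a_j < a_{j+1}$ for every $j \le j_0$. -/
/-- If a positive weight `a` on `ℤ` satisfies `C⁰_μ = sup_n (a(n-1)+a(n)+a(n+1))/a(n) = 3` and
`a j₀ < a (j₀+1)` for some `j₀`, then `a j < a (j+1)` for every `j ≤ j₀`. -/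
theorem stmt_12 (a : ℤ → ℝ) (ha : ∀ n, 0 < a n)
    (hC0 : sSup {x | ∃ n : ℤ, x = (a (n - 1) + a n + a (n + 1)) / a n} = 3)
    (j₀ : ℤ) (hj₀ : a j₀ < a (j₀ + 1)) :
    ∀ j ≤ j₀, a j < a (j + 1) := by
  set S := {x : ℝ | ∃ n : ℤ, x = (a (n - 1) + a n + a (n + 1)) / a n} with hS
  have hbdd : BddAbove S := by
    by_contra hb
    rw [Real.sSup_of_not_bddAbove hb] at hC0
    norm_num at hC0
  have key : ∀ n : ℤ, a (n + 1) + a (n - 1) ≤ 2 * a n := by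
    intro n
    have hmem : (a (n - 1) + a n + a (n + 1)) / a n ∈ S := ⟨n, rfl⟩
    have h3 : (a (n - 1) + a n + a (n + 1)) / a n ≤ 3 := hC0 ▸ le_csSup hbdd hmem
    rw [div_le_iff₀ (ha n)] at h3
    linarith
  -- downward induction: for all k : ℕ, a (j₀ - k) < a (j₀ - k + 1) and the difference is ≥ d
  have main : ∀ k : ℕ, a (j₀ + 1) - a j₀ ≤ a (j₀ - k + 1) - a (j₀ - k) := by
    intro k
    induction k with
    | zero => simp
    | succ m ih =>
      have hk := key (j₀ - m)
      have h1 : (j₀ - (m + 1 : ℕ) : ℤ) = (j₀ - m) - 1 := by push_cast; ring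
      have h2 : (j₀ - (m + 1 : ℕ) + 1 : ℤ) = j₀ - m := by push_cast; ring
      have h3 : (j₀ - (m : ℕ) : ℤ) - 1 + 1 = j₀ - m := by ring
      rw [h1, h3]
      linarith [hk]
  intro j hj
  have hk : (j₀ - (j₀ - j).toNat : ℤ) = j := by
    rw [Int.toNat_of_nonneg (by omega)]; ring
  have := main (j₀ - j).toNat
  rw [hk] at this
  linarith
end
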